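/- The number of rooted spanning hyperforests with exactly r components of the complete k-uniform hypergraph on n labeled vertices equals binomial(n-1, r-1) * (n-r)! / (((n-r)/(k-1))! * ((k-1)!)^((n-r)/(k-1))) * n^((n-r)/(k-1)), when k - 1 divides n - r; it is 0 otherwise. -/

import Mathlib

/-- Two vertices are adjacent in a hypergraph if some hyperedge contains both. -/
def HGAdj {V : Type} (E : Finset (Finset V)) (a b : V) : Prop :=
  ∃ A ∈ E, a ∈ A ∧ b ∈ A

/-- A hypergraph (on a fixed vertex type) is connected if every pair of vertices
is joined by a walk, i.e. by a chain of adjacencies. -/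
def HGConnected {V : Type} (E : Finset (Finset V)) : Prop :=
  ∀ a b : V, Relation.ReflTransGen (HGAdj E) a b

/-- A hypergraph contains a (hyper)cycle: a closed walk
`(v 0, e 0, v 1, e 1, …, e (k-1), v k)` of length `k ≥ 2` with distinct
vertices `v 0, …, v (k-1)`, `v k = v 0`, and distinct hyperedges. -/
def HasHGCycle {V : Type} (E : Finset (Finset V)) : Prop :=
  ∃ (k : ℕ) (v : ℕ → V) (e : ℕ → Finset V),
    2 ≤ k ∧ (∀ i < k, e i ∈ E) ∧ (∀ i < k, v i ∈ e i ∧ v (i + 1) ∈ e i) ∧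
    v k = v 0 ∧ (∀ i < k, ∀ j < k, v i = v j → i = j) ∧
    (∀ i < k, ∀ j < k, e i = e j → i = j)

/-!
Double counting, after Pitman's proof of the forest formula. Deleting an edge `e` from an
acyclic hypergraph splits the component of `e` into `|e|` components, one through each vertex of
`e`: the one containing the old root keeps it, the others are rooted at their vertex in `e`.
Hence an acyclic hypergraph on `n` vertices has `n - ∑ (|A| - 1)` components, so a `k`-uniform
rooted forest with `m` edges has `c = n - (k - 1) m` of them. Recording the vertex `x` of `e`
that stays with the old root and the set `S` of new roots turns edge deletion into a bijection
  (forest with `m + 1` edges, one of its edges) ≃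
  (forest with `m` edges, a vertex `x`, `k - 1` roots of components other than that of `x`),
whose inverse adds the edge `insert x S` and roots the merged component at the root of `x`. Thus
`N (m + 1) * (m + 1) = N m * n * C(c - 1, k - 1)`, and induction on `m` gives
`N m * m! * ((k - 1)!) ^ m * (c - 1)! = n ^ m * (n - 1)!`, which is the formula for `r = c`.
-/

open Finset
open scoped Nat
variable {V : Type}

instance (E : Finset (Finset V)) : Std.Symm (HGAdj E) :=
  ⟨fun _ _ ⟨A, hA, ha, hb⟩ => ⟨A, hA, hb, ha⟩⟩

abbrev HGReach (E : Finset (Finset V)) : V → V → Prop := Relation.ReflTransGen (HGAdj E)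

section Reach

variable {E E' : Finset (Finset V)} {A : Finset V} {a b : V}

lemma HGReach.mono (h : E ⊆ E') (hab : HGReach E a b) : HGReach E' a b :=
  Relation.ReflTransGen.mono (fun _ _ ⟨A, hA, ha, hb⟩ => ⟨A, h hA, ha, hb⟩) _ _ hab

lemma hgReach_of_mem (hA : A ∈ E) (ha : a ∈ A) (hb : b ∈ A) : HGReach E a b :=
  .single ⟨A, hA, ha, hb⟩

lemma HGReach.eq_of_empty (h : HGReach ∅ a b) : a = b := by
  induction h with
  | refl => rfl
  | tail _ hadj => simp [HGAdj] at hadj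

lemma quot_mk_eq_iff_hgReach :
    Quot.mk (HGAdj E) a = Quot.mk (HGAdj E) b ↔ HGReach E a b := by
  rw [HGReach, ← Relation.EqvGen.eqvGen_eq_reflTransGen]
  exact ⟨Quot.eqvGen_exact, Quot.eqvGen_sound⟩

lemma hgReach_of_forall_adj (w : ℕ → V) {i j : ℕ} (hij : i ≤ j)
    (h : ∀ s, i ≤ s → s < j → HGAdj E (w s) (w (s + 1))) : HGReach E (w i) (w j) :=
  (reflTransGen_of_succ_of_le (fun s t => HGAdj E (w s) (w t))
    (fun s hs => by simpa using h s hs.1 hs.2) hij).lift w (fun _ _ => id) _ _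

variable [DecidableEq V]

lemma hgReach_erase_or {e : Finset V} (h : HGReach E a b) :
    HGReach (E.erase e) a b ∨ ∃ w ∈ e, HGReach (E.erase e) a w := by
  induction h using Relation.ReflTransGen.head_induction_on with
  | refl => exact .inl .refl
  | head hadj _ ih =>
    obtain ⟨A, hA, ha, hc⟩ := hadj
    by_cases hAe : A = e
    · exact .inr ⟨_, hAe ▸ ha, .refl⟩
    · have hstep : HGAdj (E.erase e) _ _ := ⟨A, mem_erase.2 ⟨hAe, hA⟩, ha, hc⟩
      exact ih.imp (.head hstep) fun ⟨w, hw, hcw⟩ => ⟨w, hw, .head hstep hcw⟩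

end Reach


section Walk

variable {E E' : Finset (Finset V)} {t : ℕ} {w : ℕ → V} {f : ℕ → Finset V}

def IsHGWalk (E : Finset (Finset V)) (t : ℕ) (w : ℕ → V) (f : ℕ → Finset V) : Prop :=
  ∀ i < t, f i ∈ E ∧ w i ∈ f i ∧ w (i + 1) ∈ f i

lemma hasHGCycle_iff : HasHGCycle E ↔ ∃ t w f, 2 ≤ t ∧ IsHGWalk E t w f ∧ w t = w 0 ∧
    Set.InjOn w (Set.Iio t) ∧ Set.InjOn f (Set.Iio t) :=
  ⟨fun ⟨t, w, f, ht, hf, hw, hcl, hwi, hfi⟩ =>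
      ⟨t, w, f, ht, fun i hi => ⟨hf i hi, hw i hi⟩, hcl, hwi, hfi⟩,
    fun ⟨t, w, f, ht, hwalk, hcl, hwi, hfi⟩ =>
      ⟨t, w, f, ht, fun i hi => (hwalk i hi).1, fun i hi => (hwalk i hi).2, hcl,
        fun _ hi _ hj => hwi hi hj, fun _ hi _ hj => hfi hi hj⟩⟩

lemma IsHGWalk.mono (h : E ⊆ E') (hw : IsHGWalk E t w f) : IsHGWalk E' t w f :=
  fun i hi => ⟨h (hw i hi).1, (hw i hi).2⟩

lemma HasHGCycle.mono (h : E ⊆ E') (hc : HasHGCycle E) : HasHGCycle E' := by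
  obtain ⟨t, w, f, ht, hw, hrest⟩ := hasHGCycle_iff.1 hc
  exact hasHGCycle_iff.2 ⟨t, w, f, ht, hw.mono h, hrest⟩

lemma IsHGWalk.of_le {t' : ℕ} (hw : IsHGWalk E t w f) (ht : t' ≤ t) : IsHGWalk E t' w f :=
  fun i hi => hw i (hi.trans_le ht)

lemma IsHGWalk.snoc (hw : IsHGWalk E t w f) {A : Finset V} (hA : A ∈ E) (hwt : w t ∈ A)
    {c : V} (hc : c ∈ A) :
    IsHGWalk E (t + 1) (Function.update w (t + 1) c) (Function.update f t A) := by
  intro i hi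
  rcases (Nat.lt_succ_iff.1 hi).lt_or_eq with hi | rfl
  · simpa [Function.update_of_ne hi.ne, Function.update_of_ne (by omega : i ≠ t + 1),
      Function.update_of_ne (by omega : i + 1 ≠ t + 1)] using hw i hi
  · simp [hA, hwt, hc]

lemma IsHGWalk.shortcut (hw : IsHGWalk E t w f) {i j : ℕ} (hij : i < j) (hjt : j < t)
    (hwi : w i ∈ f j) :
    ∃ t' < t, ∃ w' f', IsHGWalk E t' w' f' ∧ w' 0 = w 0 ∧ w' t' = w t := by
  refine ⟨t - (j - i), by omega, fun s => w (if s ≤ i then s else s + (j - i)),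
    fun s => f (if s < i then s else s + (j - i)), fun s hs => ?_, by simp, ?_⟩
  · rcases lt_trichotomy s i with hs' | rfl | hs'
    · simpa [hs', hs'.le, Nat.succ_le_of_lt hs'] using hw s (by omega)
    · simp only [le_refl, if_true, lt_irrefl, if_false, show ¬ s + 1 ≤ s by omega,
        show s + (j - s) = j by omega, show s + 1 + (j - s) = j + 1 by omega]
      exact ⟨(hw j hjt).1, hwi, (hw j hjt).2.2⟩
    · simpa [hs'.not_gt, hs'.not_ge, show ¬ s + 1 ≤ i by omega,
        show s + 1 + (j - i) = s + (j - i) + 1 by omega] using hw (s + (j - i)) (by omega)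
  · dsimp only
    split_ifs <;> congr 1 <;> omega

lemma IsHGWalk.exists_shorter_of_not_injOn (hw : IsHGWalk E t w f)
    (hinj : ¬ (Set.InjOn w (Set.Iic t) ∧ Set.InjOn f (Set.Iio t))) :
    ∃ t' < t, ∃ w' f', IsHGWalk E t' w' f' ∧ w' 0 = w 0 ∧ w' t' = w t := by
  simp only [Set.InjOn, Set.mem_Iic, Set.mem_Iio, not_and_or, not_forall] at hinj
  rcases hinj with ⟨i, hi, j, hj, hwij, hne⟩ | ⟨i, hi, j, hj, hfij, hne⟩
  · wlog hij : i < j generalizing i j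
    · exact this j hj i hi hwij.symm (Ne.symm hne) (by omega)
    rcases hj.lt_or_eq with hjt | rfl
    · exact hw.shortcut hij hjt (hwij ▸ (hw j hjt).2.1)
    · exact ⟨i, hij, w, f, hw.of_le hij.le, rfl, hwij⟩
  · wlog hij : i < j generalizing i j
    · exact this j hj i hi hfij.symm (Ne.symm hne) (by omega)
    exact hw.shortcut hij hj (hfij ▸ (hw i (hij.trans hj)).2.1)

lemma IsHGWalk.exists_injOn (hw : IsHGWalk E t w f) :
    ∃ t' w' f', IsHGWalk E t' w' f' ∧ Set.InjOn w' (Set.Iic t') ∧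
      Set.InjOn f' (Set.Iio t') ∧ w' 0 = w 0 ∧ w' t' = w t := by
  induction t using Nat.strong_induction_on generalizing w f with
  | _ t ih =>
    by_cases hinj : Set.InjOn w (Set.Iic t) ∧ Set.InjOn f (Set.Iio t)
    · exact ⟨t, w, f, hw, hinj.1, hinj.2, rfl, rfl⟩
    · obtain ⟨t', ht', w', f', hw', h0, ht⟩ := hw.exists_shorter_of_not_injOn hinj
      obtain ⟨t'', w'', f'', hw'', hwinj, hfinj, h0', ht''⟩ := ih t' ht' hw'
      exact ⟨t'', w'', f'', hw'', hwinj, hfinj, h0'.trans h0, ht''.trans ht⟩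

lemma HGReach.exists_isHGWalk {a b : V} (h : HGReach E a b) :
    ∃ t w f, IsHGWalk E t w f ∧ w 0 = a ∧ w t = b := by
  induction h with
  | refl => exact ⟨0, fun _ => a, fun _ => ∅, fun _ h => (Nat.not_lt_zero _ h).elim, rfl, rfl⟩
  | tail _ hadj ih =>
    obtain ⟨t, w, f, hw, h0, rfl⟩ := ih
    obtain ⟨A, hA, hb, hc⟩ := hadj
    exact ⟨t + 1, _, _, hw.snoc hA hb hc, by simp [h0], by simp⟩

end Walk

section Acyclic

variable [DecidableEq V] {E : Finset (Finset V)} {e : Finset V}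

lemma not_hgReach_erase (hE : ¬ HasHGCycle E) (he : e ∈ E) {u v : V} (hu : u ∈ e)
    (hv : v ∈ e) (huv : u ≠ v) : ¬ HGReach (E.erase e) u v := by
  intro h
  obtain ⟨t₀, w₀, f₀, hw₀, rfl, rfl⟩ := h.exists_isHGWalk
  obtain ⟨t, w, f, hw, hwinj, hfinj, h0, ht⟩ := hw₀.exists_injOn
  have ht1 : 1 ≤ t := Nat.one_le_iff_ne_zero.2 fun ht0 => huv (by rw [← h0, ← ht, ht0])
  have hfe : ∀ i < t, f i ≠ e := fun i hi => ne_of_mem_erase (hw i hi).1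
  refine hE (hasHGCycle_iff.2 ⟨t + 1, _, _, by omega,
    (hw.mono (erase_subset e E)).snoc he (ht ▸ hv) (h0 ▸ hu), by simp, ?_, ?_⟩)
  · intro i hi j hj hij
    simp only [Set.mem_Iio] at hi hj
    simp only [Function.update_of_ne hi.ne, Function.update_of_ne hj.ne] at hij
    exact hwinj (Set.mem_Iic.2 (by omega)) (Set.mem_Iic.2 (by omega)) hij
  · intro i hi j hj hij
    simp only [Set.mem_Iio] at hi hj
    rcases (Nat.lt_succ_iff.1 hi).lt_or_eq with hi | rfl <;>
      rcases (Nat.lt_succ_iff.1 hj).lt_or_eq with hj | rfl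
    · simp only [Function.update_of_ne hi.ne, Function.update_of_ne hj.ne] at hij
      exact hfinj hi hj hij
    · simp only [Function.update_of_ne hi.ne, Function.update_self] at hij
      exact absurd hij (hfe i hi)
    · simp only [Function.update_of_ne hj.ne, Function.update_self] at hij
      exact absurd hij.symm (hfe j hj)
    · rfl

lemma not_hasHGCycle_insert {E : Finset (Finset V)} (hE : ¬ HasHGCycle E)
    (hsep : ∀ u ∈ e, ∀ v ∈ e, u ≠ v → ¬ HGReach E u v) :
    ¬ HasHGCycle (insert e E) := by
  rw [hasHGCycle_iff]
  rintro ⟨t, w, f, ht, hw, hcl, hwinj, hfinj⟩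
  by_cases huse : ∃ i < t, f i = e
  · obtain ⟨i, hit, hfi⟩ := huse
    have hadj : ∀ j < t, j ≠ i → HGAdj E (w j) (w (j + 1)) := by
      intro j hj hji
      have hfj : f j ∈ E := (mem_insert.1 (hw j hj).1).resolve_left
        fun h => hji (hfinj hj hit (h.trans hfi.symm))
      exact ⟨f j, hfj, (hw j hj).2⟩
    have hreach : HGReach E (w (i + 1)) (w i) := by
      refine .trans (hcl ▸ hgReach_of_forall_adj w (by omega)
        fun j hj hj' => hadj j hj' (by omega)) (hgReach_of_forall_adj w (Nat.zero_le i)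
        fun j _ hj => hadj j (by omega) (by omega))
    refine hsep _ (hfi ▸ (hw i hit).2.2) _ (hfi ▸ (hw i hit).2.1) ?_ hreach
    intro hww
    rcases (show i + 1 ≤ t by omega).lt_or_eq with hi1 | hi1
    · exact absurd (hwinj hi1 hit hww) (by omega)
    · rw [hi1, hcl] at hww
      exact absurd (hwinj (by simp; omega) hit hww) (by omega)
  · push Not at huse
    exact hE (hasHGCycle_iff.2 ⟨t, w, f, ht,
      fun i hi => ⟨(mem_insert.1 (hw i hi).1).resolve_left (huse i hi), (hw i hi).2⟩,
      hcl, hwinj, hfinj⟩)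

end Acyclic

structure IsRootMap (E : Finset (Finset V)) (ρ : V → V) : Prop where
  reach : ∀ v, HGReach E v (ρ v)
  eq_of_reach : ∀ {u v}, HGReach E u v → ρ u = ρ v

namespace IsRootMap

variable {E : Finset (Finset V)} {ρ : V → V}

lemma root_root (hρ : IsRootMap E ρ) (v : V) : ρ (ρ v) = ρ v :=
  (hρ.eq_of_reach (hρ.reach v)).symm

lemma eq_id_of_empty (hρ : IsRootMap ∅ ρ) : ρ = id :=
  funext fun v => (hρ.reach v).eq_of_empty.symm

lemma of_section {s : Quot (HGAdj E) → V} (hs : ∀ c, Quot.mk (HGAdj E) (s c) = c) :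
    IsRootMap E fun v => s (Quot.mk (HGAdj E) v) where
  reach _ := symm (quot_mk_eq_iff_hgReach.1 (hs _))
  eq_of_reach h := congrArg s (quot_mk_eq_iff_hgReach.2 h)

variable [Fintype V] [DecidableEq V]

lemma apply_eq_self_of_mem_image (hρ : IsRootMap E ρ) {w : V} (hw : w ∈ univ.image ρ) :
    ρ w = w := by
  obtain ⟨v, -, rfl⟩ := mem_image.1 hw
  exact hρ.root_root v

lemma card_quot (hρ : IsRootMap E ρ) : Nat.card (Quot (HGAdj E)) = (univ.image ρ).card := by
  rw [← Nat.card_eq_finsetCard]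
  refine Nat.card_eq_of_bijective
    (fun c => ⟨Quot.lift ρ (fun _ _ h => hρ.eq_of_reach (.single h)) c, ?_⟩) ⟨?_, ?_⟩
  · induction c using Quot.ind with
    | _ v => exact mem_image_of_mem ρ (mem_univ v)
  · intro c d hcd
    induction c using Quot.ind with | _ a => ?_
    induction d using Quot.ind with | _ b => ?_
    have hab : ρ a = ρ b := congrArg Subtype.val hcd
    exact quot_mk_eq_iff_hgReach.2 ((hρ.reach a).trans (hab ▸ symm (hρ.reach b)))
  · rintro ⟨w, hw⟩
    exact ⟨Quot.mk _ w, Subtype.ext (hρ.apply_eq_self_of_mem_image hw)⟩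

end IsRootMap

section EraseEdge

variable [DecidableEq V]

open Classical in
-- In an acyclic hypergraph the vertex of `e` reachable from `v` is unique
-- (`not_hgReach_erase`), so the choice below is harmless.
noncomputable def rootErase (E : Finset (Finset V)) (e : Finset V) (ρ : V → V) (v : V) : V :=
  if HGReach (E.erase e) v (ρ v) then ρ v
  else if h : ∃ w ∈ e, HGReach (E.erase e) v w then h.choose else v

open Classical in
noncomputable def newRoots (E : Finset (Finset V)) (e : Finset V) (ρ : V → V) : Finset V :=
  e.filter fun w => ¬ HGReach (E.erase e) w (ρ w)

variable {E : Finset (Finset V)} {e : Finset V} {ρ : V → V}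

lemma mem_newRoots {w : V} :
    w ∈ newRoots E e ρ ↔ w ∈ e ∧ ¬ HGReach (E.erase e) w (ρ w) := by
  classical
  rw [newRoots, mem_filter]

lemma rootErase_of_hgReach {v : V} (h : HGReach (E.erase e) v (ρ v)) :
    rootErase E e ρ v = ρ v := by
  classical
  rw [rootErase, if_pos h]

lemma rootErase_of_not_hgReach (hρ : IsRootMap E ρ) {v : V}
    (h : ¬ HGReach (E.erase e) v (ρ v)) :
    rootErase E e ρ v ∈ e ∧ HGReach (E.erase e) v (rootErase E e ρ v) := by
  classical
  have hex : ∃ w ∈ e, HGReach (E.erase e) v w :=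
    (hgReach_erase_or (hρ.reach v)).resolve_left h
  rw [rootErase, if_neg h, dif_pos hex]
  exact hex.choose_spec

variable (hE : ¬ HasHGCycle E) (he : e ∈ E) (hρ : IsRootMap E ρ)
include hE he hρ

lemma IsRootMap.eraseEdge : IsRootMap (E.erase e) (rootErase E e ρ) := by
  refine ⟨fun v => ?_, fun {u v} huv => ?_⟩
  · by_cases h : HGReach (E.erase e) v (ρ v)
    · rw [rootErase_of_hgReach h]; exact h
    · exact (rootErase_of_not_hgReach hρ h).2
  · have hρuv : ρ u = ρ v := hρ.eq_of_reach (huv.mono (erase_subset e E))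
    by_cases hu : HGReach (E.erase e) u (ρ u)
    · have hv : HGReach (E.erase e) v (ρ v) := hρuv ▸ (symm huv).trans hu
      rw [rootErase_of_hgReach hu, rootErase_of_hgReach hv, hρuv]
    · have hv : ¬ HGReach (E.erase e) v (ρ v) := fun hv => hu (hρuv ▸ huv.trans hv)
      obtain ⟨hue, hu'⟩ := rootErase_of_not_hgReach hρ hu
      obtain ⟨hve, hv'⟩ := rootErase_of_not_hgReach hρ hv
      by_contra hne
      exact not_hgReach_erase hE he hue hve hne ((symm hu').trans (huv.trans hv'))

lemma existsUnique_mem_hgReach_root (hne : e.Nonempty) :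
    ∃! x, x ∈ e ∧ HGReach (E.erase e) x (ρ x) := by
  obtain ⟨u, hu⟩ := hne
  have hex : ∃ x ∈ e, HGReach (E.erase e) x (ρ x) := by
    rcases hgReach_erase_or (symm (hρ.reach u)) with h | ⟨w, hw, hw'⟩
    · exact ⟨u, hu, symm h⟩
    · exact ⟨w, hw, hρ.eq_of_reach (hgReach_of_mem he hw hu) ▸ symm hw'⟩
  obtain ⟨x, hx, hxr⟩ := hex
  refine ⟨x, ⟨hx, hxr⟩, fun y ⟨hy, hyr⟩ => ?_⟩
  by_contra hne
  have hρyx : ρ y = ρ x := hρ.eq_of_reach (hgReach_of_mem he hy hx)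
  exact not_hgReach_erase hE he hy hx hne (hyr.trans (hρyx ▸ symm hxr))

lemma card_newRoots : (newRoots E e ρ).card = e.card - 1 := by
  classical
  rcases e.eq_empty_or_nonempty with rfl | hne
  · simp [newRoots]
  obtain ⟨x, hx, hxu⟩ := existsUnique_mem_hgReach_root hE he hρ hne
  have hkept : e.filter (fun w => HGReach (E.erase e) w (ρ w)) = {x} :=
    eq_singleton_iff_unique_mem.2 ⟨mem_filter.2 hx, fun w hw => hxu w (mem_filter.1 hw)⟩
  have hsplit :=
    card_filter_add_card_filter_not (s := e) (p := fun w => HGReach (E.erase e) w (ρ w))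
  rw [hkept, card_singleton] at hsplit
  rw [newRoots]
  omega

variable [Fintype V]

lemma image_rootErase :
    univ.image (rootErase E e ρ) = univ.image ρ ∪ newRoots E e ρ := by
  ext y
  simp only [mem_union, mem_image, mem_univ, true_and, mem_newRoots]
  constructor
  · rintro ⟨v, rfl⟩
    by_cases h : HGReach (E.erase e) v (ρ v)
    · exact .inl ⟨v, (rootErase_of_hgReach h).symm⟩
    · obtain ⟨hd, hvd⟩ := rootErase_of_not_hgReach hρ h
      refine .inr ⟨hd, fun hd' => h ?_⟩
      have : ρ (rootErase E e ρ v) = ρ v :=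
        hρ.eq_of_reach (symm (hvd.mono (erase_subset e E)))
      exact hvd.trans (this ▸ hd')
  · rintro (⟨u, rfl⟩ | ⟨hye, hy⟩)
    · exact ⟨ρ u, by rw [rootErase_of_hgReach (by rw [hρ.root_root]), hρ.root_root]⟩
    · obtain ⟨hd, hyd⟩ := rootErase_of_not_hgReach hρ hy
      by_contra hne
      exact not_hgReach_erase hE he hye hd (Ne.symm (hne ⟨y, ·⟩)) hyd

omit hE he in
lemma disjoint_image_newRoots : Disjoint (univ.image ρ) (newRoots E e ρ) := by
  refine disjoint_left.2 fun w hw hwN => (mem_newRoots.1 hwN).2 ?_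
  rw [hρ.apply_eq_self_of_mem_image hw]

lemma card_image_rootErase :
    (univ.image (rootErase E e ρ)).card = (univ.image ρ).card + (e.card - 1) := by
  rw [image_rootErase hE he hρ, card_union_of_disjoint (disjoint_image_newRoots hρ),
    card_newRoots hE he hρ]

end EraseEdge

lemma IsRootMap.card_image_add_sum_card_sub_one [Fintype V] [DecidableEq V]
    {E : Finset (Finset V)} {ρ : V → V} (hE : ¬ HasHGCycle E) (hρ : IsRootMap E ρ) :
    (univ.image ρ).card + ∑ A ∈ E, (A.card - 1) = Fintype.card V := by
  induction E using Finset.induction_on generalizing ρ with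
  | empty => simp [hρ.eq_id_of_empty]
  | insert e E heE ih =>
    have he := mem_insert_self e E
    have hρ' := hρ.eraseEdge hE he
    rw [erase_insert heE] at hρ'
    have hcard := card_image_rootErase hE he hρ
    rw [sum_insert heE, ← ih (fun h => hE (h.mono (subset_insert e E))) hρ', hcard]
    ring

section InsertEdge

open Classical in
noncomputable def rootInsert (E : Finset (Finset V)) (ρ : V → V) (x v : V) : V :=
  if HGReach E v x then ρ x else ρ v

variable {E : Finset (Finset V)} {ρ : V → V} {x : V} {S : Finset V}

lemma rootInsert_of_hgReach {v : V} (h : HGReach E v x) : rootInsert E ρ x v = ρ x := by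
  classical
  rw [rootInsert, if_pos h]

lemma rootInsert_of_not_hgReach {v : V} (h : ¬ HGReach E v x) : rootInsert E ρ x v = ρ v := by
  classical
  rw [rootInsert, if_neg h]

variable [Fintype V] [DecidableEq V] (hρ : IsRootMap E ρ)
  (hS : S ⊆ (univ.image ρ).erase (ρ x))
include hρ hS

lemma notMem_of_subset_image_erase : x ∉ S := fun hx =>
  ne_of_mem_erase (hS hx) (hρ.apply_eq_self_of_mem_image (mem_of_mem_erase (hS hx))).symm

lemma eq_of_hgReach_of_mem_insert {u v : V} (hu : u ∈ insert x S) (hv : v ∈ insert x S)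
    (huv : HGReach E u v) : u = v := by
  have hroot : ∀ s ∈ S, ρ s = s := fun s hs =>
    hρ.apply_eq_self_of_mem_image (mem_of_mem_erase (hS hs))
  have hx : ∀ s ∈ S, ρ x ≠ s := fun s hs => (ne_of_mem_erase (hS hs)).symm
  have := hρ.eq_of_reach huv
  rcases mem_insert.1 hu with rfl | huS <;> rcases mem_insert.1 hv with rfl | hvS
  · rfl
  · exact absurd (this.trans (hroot v hvS)) (hx v hvS)
  · exact absurd (this.symm.trans (hroot u huS)) (hx u huS)
  · rw [← hroot u huS, ← hroot v hvS, this]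

lemma insert_notMem (hSne : S.Nonempty) : insert x S ∉ E := by
  intro hmem
  obtain ⟨s, hs⟩ := hSne
  have := eq_of_hgReach_of_mem_insert hρ hS (mem_insert_self x S) (mem_insert_of_mem hs)
    (hgReach_of_mem hmem (mem_insert_self x S) (mem_insert_of_mem hs))
  exact notMem_of_subset_image_erase hρ hS (this ▸ hs)

lemma not_hasHGCycle_insert_insert (hE : ¬ HasHGCycle E) : ¬ HasHGCycle (insert (insert x S) E) :=
  not_hasHGCycle_insert hE fun _ hu _ hv huv h => huv (eq_of_hgReach_of_mem_insert hρ hS hu hv h)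

lemma IsRootMap.insertEdge (hSne : S.Nonempty) :
    IsRootMap (insert (insert x S) E) (rootInsert (insert (insert x S) E) ρ x) := by
  set E₁ := insert (insert x S) E
  have hsub : E ⊆ E₁ := subset_insert _ _
  have hdown : ∀ {u v}, HGReach E₁ u v → ¬ HGReach E₁ u x → HGReach E u v := by
    intro u v huv hux
    rcases hgReach_erase_or (e := insert x S) huv with h | ⟨w, hw, huw⟩
    · rwa [erase_insert (insert_notMem hρ hS hSne)] at h
    · rw [erase_insert (insert_notMem hρ hS hSne)] at huw
      exact absurd ((huw.mono hsub).trans (hgReach_of_mem (mem_insert_self _ _) hw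
        (mem_insert_self x S))) hux
  refine ⟨fun v => ?_, fun {u v} huv => ?_⟩
  · by_cases h : HGReach E₁ v x
    · rw [rootInsert_of_hgReach h]
      exact h.trans ((hρ.reach x).mono hsub)
    · rw [rootInsert_of_not_hgReach h]
      exact (hρ.reach v).mono hsub
  · by_cases h : HGReach E₁ u x
    · rw [rootInsert_of_hgReach h, rootInsert_of_hgReach ((symm huv).trans h)]
    · rw [rootInsert_of_not_hgReach h, rootInsert_of_not_hgReach fun hv => h (huv.trans hv)]
      exact hρ.eq_of_reach (hdown huv h)

end InsertEdge

section Anchor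

variable [Nonempty V] [DecidableEq V]

noncomputable def anchor (E : Finset (Finset V)) (e : Finset V) (ρ : V → V) : V :=
  Classical.epsilon fun x => x ∈ e ∧ HGReach (E.erase e) x (ρ x)

variable {E : Finset (Finset V)} {e : Finset V} {ρ : V → V}
  (hE : ¬ HasHGCycle E) (he : e ∈ E) (hρ : IsRootMap E ρ) (hne : e.Nonempty)
include hE he hρ hne

lemma anchor_spec :
    anchor E e ρ ∈ e ∧ HGReach (E.erase e) (anchor E e ρ) (ρ (anchor E e ρ)) :=
  Classical.epsilon_spec (existsUnique_mem_hgReach_root hE he hρ hne).exists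

lemma eq_anchor {x : V} (hx : x ∈ e) (hxr : HGReach (E.erase e) x (ρ x)) : x = anchor E e ρ :=
  (existsUnique_mem_hgReach_root hE he hρ hne).unique ⟨hx, hxr⟩ (anchor_spec hE he hρ hne)

lemma insert_anchor_newRoots : insert (anchor E e ρ) (newRoots E e ρ) = e := by
  ext w
  simp only [mem_insert, mem_newRoots]
  refine ⟨?_, fun hw => ?_⟩
  · rintro (rfl | ⟨hw, -⟩)
    exacts [(anchor_spec hE he hρ hne).1, hw]
  · by_cases h : HGReach (E.erase e) w (ρ w)
    · exact .inl (eq_anchor hE he hρ hne hw h)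
    · exact .inr ⟨hw, h⟩

lemma rootInsert_rootErase : rootInsert E (rootErase E e ρ) (anchor E e ρ) = ρ := by
  obtain ⟨hx, hxr⟩ := anchor_spec hE he hρ hne
  funext v
  by_cases h : HGReach E v (anchor E e ρ)
  · rw [rootInsert_of_hgReach h, rootErase_of_hgReach hxr]
    exact (hρ.eq_of_reach h).symm
  · rw [rootInsert_of_not_hgReach h]
    refine rootErase_of_hgReach (not_not.1 fun hv => h ?_)
    obtain ⟨hd, hvd⟩ := rootErase_of_not_hgReach hρ hv
    exact (hvd.mono (erase_subset e E)).trans (hgReach_of_mem he hd hx)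

variable [Fintype V]

lemma newRoots_subset_image_rootErase :
    newRoots E e ρ ⊆
      (univ.image (rootErase E e ρ)).erase (rootErase E e ρ (anchor E e ρ)) := by
  intro w hw
  have hanchor := rootErase_of_hgReach (anchor_spec hE he hρ hne).2
  refine mem_erase.2 ⟨fun hww => ?_, image_rootErase hE he hρ ▸ mem_union_right _ hw⟩
  refine disjoint_left.1 (disjoint_image_newRoots hρ) ?_ hw
  rw [hww, hanchor]
  exact mem_image_of_mem ρ (mem_univ _)

end Anchor

section Graft

variable [Fintype V] [DecidableEq V] {E : Finset (Finset V)} {ρ : V → V} {x : V} {S : Finset V}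
  (hρ : IsRootMap E ρ) (hS : S ⊆ (univ.image ρ).erase (ρ x)) (hSne : S.Nonempty)
include hρ hS hSne

lemma erase_insert_insert : (insert (insert x S) E).erase (insert x S) = E :=
  erase_insert (insert_notMem hρ hS hSne)

lemma rootErase_rootInsert :
    rootErase (insert (insert x S) E) (insert x S)
      (rootInsert (insert (insert x S) E) ρ x) = ρ := by
  set E₁ := insert (insert x S) E
  have herase : E₁.erase (insert x S) = E := erase_insert_insert hρ hS hSne
  have hroot : ∀ s ∈ S, ρ s = s := fun s hs =>
    hρ.apply_eq_self_of_mem_image (mem_of_mem_erase (hS hs))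
  funext v
  by_cases hvx : HGReach E₁ v x
  · have hv₁ : rootInsert E₁ ρ x v = ρ x := rootInsert_of_hgReach hvx
    by_cases h : HGReach E v (ρ x)
    · rw [rootErase_of_hgReach (by rwa [herase, hv₁]), hv₁]
      exact ((hρ.eq_of_reach h).trans (hρ.root_root x)).symm
    · have h' : ¬ HGReach (E₁.erase (insert x S)) v (rootInsert E₁ ρ x v) := by
        rwa [herase, hv₁]
      obtain ⟨hd, hvd⟩ := rootErase_of_not_hgReach (hρ.insertEdge hS hSne) h'
      rw [herase] at hvd
      rcases mem_insert.1 hd with hdx | hdS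
      · rw [hdx] at hvd
        exact absurd (hvd.trans (hρ.reach x)) h
      · exact ((hρ.eq_of_reach hvd).trans (hroot _ hdS)).symm
  · have hv₁ : rootInsert E₁ ρ x v = ρ v := rootInsert_of_not_hgReach hvx
    rw [rootErase_of_hgReach (by rw [herase, hv₁]; exact hρ.reach v), hv₁]

lemma newRoots_rootInsert :
    newRoots (insert (insert x S) E) (insert x S)
      (rootInsert (insert (insert x S) E) ρ x) = S := by
  set E₁ := insert (insert x S) E
  have herase : E₁.erase (insert x S) = E := erase_insert_insert hρ hS hSne
  ext w
  rw [mem_newRoots, herase]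
  refine ⟨fun ⟨hw, hwr⟩ => ?_, fun hw => ⟨mem_insert_of_mem hw, fun hwr => ?_⟩⟩
  · rcases mem_insert.1 hw with rfl | hwS
    · exact absurd (by rw [rootInsert_of_hgReach .refl]; exact hρ.reach w) hwr
    · exact hwS
  · have hwx : HGReach E₁ w x := hgReach_of_mem (mem_insert_self _ _) (mem_insert_of_mem hw)
      (mem_insert_self x S)
    rw [rootInsert_of_hgReach hwx] at hwr
    have := (hρ.eq_of_reach hwr).trans (hρ.root_root x)
    rw [hρ.apply_eq_self_of_mem_image (mem_of_mem_erase (hS hw))] at this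
    exact ne_of_mem_erase (hS hw) this

lemma anchor_rootInsert [Nonempty V] (hE : ¬ HasHGCycle E) :
    anchor (insert (insert x S) E) (insert x S) (rootInsert (insert (insert x S) E) ρ x) = x := by
  refine (eq_anchor (not_hasHGCycle_insert_insert hρ hS hE) (mem_insert_self _ _)
    (hρ.insertEdge hS hSne) (insert_nonempty x S) (mem_insert_self x S) ?_).symm
  rw [erase_insert_insert hρ hS hSne, rootInsert_of_hgReach .refl]
  exact hρ.reach x

end Graft

lemma card_quot_add_sum_card_sub_one [Fintype V] [DecidableEq V] {E : Finset (Finset V)}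
    (hE : ¬ HasHGCycle E) :
    Nat.card (Quot (HGAdj E)) + ∑ A ∈ E, (A.card - 1) = Fintype.card V := by
  have hρ := IsRootMap.of_section (E := E) Quot.out_eq
  rw [hρ.card_quot, hρ.card_image_add_sum_card_sub_one hE]

lemma sum_card_sub_one_of_card_eq {E : Finset (Finset V)} {k : ℕ} (h : ∀ A ∈ E, A.card = k) :
    ∑ A ∈ E, (A.card - 1) = (k - 1) * E.card := by
  rw [sum_congr rfl fun A hA => by rw [h A hA], sum_const, smul_eq_mul, mul_comm]

lemma card_quot_add_mul_card_of_card_eq [Fintype V] [DecidableEq V] {E : Finset (Finset V)}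
    {k : ℕ} (hE : ¬ HasHGCycle E) (h : ∀ A ∈ E, A.card = k) :
    Nat.card (Quot (HGAdj E)) + (k - 1) * E.card = Fintype.card V :=
  sum_card_sub_one_of_card_eq h ▸ card_quot_add_sum_card_sub_one hE

lemma Nat.card_sigma_finset_of_card_eq {ι α : Type*} [Finite ι] (s : ι → Finset α) {c : ℕ}
    (h : ∀ i, (s i).card = c) : Nat.card (Σ i, s i) = Nat.card ι * c := by
  have := Fintype.ofFinite ι
  simp [h, Nat.card_eq_fintype_card]

@[ext]
structure RootedForest (V : Type) (k m : ℕ) where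
  edges : Finset (Finset V)
  root : V → V
  card_of_mem : ∀ A ∈ edges, A.card = k
  acyclic : ¬ HasHGCycle edges
  card_edges : edges.card = m
  isRootMap : IsRootMap edges root

namespace RootedForest

variable {k m : ℕ}

instance [Finite V] : Finite (RootedForest V k m) :=
  Finite.of_injective (fun F => (F.edges, F.root)) fun _ _ h =>
    RootedForest.ext (congrArg Prod.fst h) (congrArg Prod.snd h)

lemma nonempty_of_mem_edges (hk : 2 ≤ k) (F : RootedForest V k m) {e : Finset V}
    (he : e ∈ F.edges) : e.Nonempty :=
  card_pos.1 (by rw [F.card_of_mem e he]; omega)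

lemma card_zero : Nat.card (RootedForest V k 0) = 1 := by
  refine Nat.card_eq_one_iff_unique.2 ⟨⟨fun F G => ?_⟩, ⟨?_⟩⟩
  · have hF := card_eq_zero.1 F.card_edges
    have hG := card_eq_zero.1 G.card_edges
    have hρF := hF ▸ F.isRootMap
    have hρG := hG ▸ G.isRootMap
    exact RootedForest.ext (hF.trans hG.symm) (hρF.eq_id_of_empty.trans hρG.eq_id_of_empty.symm)
  · refine ⟨∅, id, by simp, fun h => ?_, card_empty,
      ⟨fun _ => .refl, fun h => h.eq_of_empty⟩⟩
    obtain ⟨t, w, f, ht, hw, -⟩ := hasHGCycle_iff.1 h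
    exact notMem_empty _ (hw 0 (by omega)).1

variable [Fintype V] [DecidableEq V]

lemma card_image_root (F : RootedForest V k m) :
    (univ.image F.root).card + (k - 1) * m = Fintype.card V := by
  rw [← F.isRootMap.card_image_add_sum_card_sub_one F.acyclic,
    sum_card_sub_one_of_card_eq F.card_of_mem, F.card_edges]

def grafts (F : RootedForest V k m) : Finset (Σ _ : V, Finset V) :=
  univ.sigma fun x => ((univ.image F.root).erase (F.root x)).powersetCard (k - 1)

lemma mem_grafts {F : RootedForest V k m} {g : Σ _ : V, Finset V} :
    g ∈ F.grafts ↔ g.2 ⊆ (univ.image F.root).erase (F.root g.1) ∧ g.2.card = k - 1 := by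
  simp [grafts, mem_powersetCard]

lemma card_grafts (F : RootedForest V k m) :
    F.grafts.card = Fintype.card V * (Fintype.card V - (k - 1) * m - 1).choose (k - 1) := by
  have hc := F.card_image_root
  rw [grafts, card_sigma, sum_congr rfl fun x _ => by
    rw [card_powersetCard, card_erase_of_mem (mem_image_of_mem _ (mem_univ x))], sum_const,
    card_univ, smul_eq_mul]
  congr 2
  omega

noncomputable def eraseEdge (F : RootedForest V k (m + 1)) (e : F.edges) :
    RootedForest V k m where
  edges := F.edges.erase e
  root := rootErase F.edges e F.root
  card_of_mem A hA := F.card_of_mem A (mem_of_mem_erase hA)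
  acyclic h := F.acyclic (h.mono (erase_subset _ _))
  card_edges := by rw [card_erase_of_mem e.2, F.card_edges, Nat.add_sub_cancel]
  isRootMap := F.isRootMap.eraseEdge F.acyclic e.2

noncomputable def insertEdge (hk : 2 ≤ k) (F : RootedForest V k m) (g : F.grafts) :
    RootedForest V k (m + 1) :=
  have hS := (mem_grafts.1 g.2).1
  have hSne : g.1.2.Nonempty := card_pos.1 (by rw [(mem_grafts.1 g.2).2]; omega)
  { edges := insert (insert g.1.1 g.1.2) F.edges
    root := rootInsert (insert (insert g.1.1 g.1.2) F.edges) F.root g.1.1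
    card_of_mem := by
      rintro A hA
      rcases mem_insert.1 hA with rfl | hA
      · rw [card_insert_of_notMem (notMem_of_subset_image_erase F.isRootMap hS),
          (mem_grafts.1 g.2).2]
        omega
      · exact F.card_of_mem A hA
    acyclic := not_hasHGCycle_insert_insert F.isRootMap hS F.acyclic
    card_edges := by
      rw [card_insert_of_notMem (insert_notMem F.isRootMap hS hSne), F.card_edges]
    isRootMap := F.isRootMap.insertEdge hS hSne }

variable [Nonempty V]

noncomputable def eraseEdgeEquiv (hk : 2 ≤ k) :
    (Σ F : RootedForest V k (m + 1), F.edges) ≃ Σ F : RootedForest V k m, F.grafts where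
  toFun p := ⟨p.1.eraseEdge p.2,
    ⟨⟨anchor p.1.edges p.2 p.1.root, newRoots p.1.edges p.2 p.1.root⟩,
      mem_grafts.2 ⟨newRoots_subset_image_rootErase p.1.acyclic p.2.2 p.1.isRootMap
        (p.1.nonempty_of_mem_edges hk p.2.2), by
        rw [card_newRoots p.1.acyclic p.2.2 p.1.isRootMap, p.1.card_of_mem _ p.2.2]⟩⟩⟩
  invFun q := ⟨q.1.insertEdge hk q.2, ⟨insert q.2.1.1 q.2.1.2, mem_insert_self _ _⟩⟩
  left_inv := by
    rintro ⟨F, e, he⟩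
    have hne := F.nonempty_of_mem_edges hk he
    have hins := insert_anchor_newRoots F.acyclic he F.isRootMap hne
    refine Sigma.subtype_ext (RootedForest.ext ?_ ?_) hins
    · exact (congrArg (insert · _) hins).trans (insert_erase he)
    · show rootInsert (insert (insert (anchor F.edges e F.root) (newRoots F.edges e F.root))
        (F.edges.erase e)) (rootErase F.edges e F.root) (anchor F.edges e F.root) = F.root
      rw [hins, insert_erase he]
      exact rootInsert_rootErase F.acyclic he F.isRootMap hne
  right_inv := by
    rintro ⟨F, ⟨x, S⟩, hg⟩
    obtain ⟨hS, hSk⟩ := mem_grafts.1 hg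
    have hSne : S.Nonempty := card_pos.1 (by rw [hSk]; omega)
    refine Sigma.subtype_ext (RootedForest.ext ?_ ?_) (Sigma.ext ?_ (heq_of_eq ?_))
    · exact erase_insert_insert F.isRootMap hS hSne
    · exact rootErase_rootInsert F.isRootMap hS hSne
    · exact anchor_rootInsert F.isRootMap hS hSne F.acyclic
    · exact newRoots_rootInsert F.isRootMap hS hSne

lemma card_succ_mul (hk : 2 ≤ k) (m : ℕ) :
    Nat.card (RootedForest V k (m + 1)) * (m + 1) = Nat.card (RootedForest V k m) *
      (Fintype.card V * (Fintype.card V - (k - 1) * m - 1).choose (k - 1)) := by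
  rw [← Nat.card_sigma_finset_of_card_eq _ fun F => F.card_edges,
    Nat.card_congr (eraseEdgeEquiv hk), Nat.card_sigma_finset_of_card_eq _ card_grafts]

lemma card_mul_factorial (hk : 2 ≤ k) (m : ℕ) (hm : (k - 1) * m < Fintype.card V) :
    Nat.card (RootedForest V k m) * (m ! * (k - 1)! ^ m * (Fintype.card V - 1 - (k - 1) * m)!) =
      Fintype.card V ^ m * (Fintype.card V - 1)! := by
  induction m with
  | zero => simp [card_zero]
  | succ m ih =>
    set n := Fintype.card V
    rw [Nat.mul_succ] at hm
    set c := n - 1 - (k - 1) * m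
    have hkc : k - 1 ≤ c := by omega
    have hc : n - 1 - (k - 1) * (m + 1) = c - (k - 1) := by rw [Nat.mul_succ]; omega
    have hrec := card_succ_mul (V := V) hk m
    rw [show n - (k - 1) * m - 1 = c by omega] at hrec
    rw [hc, Nat.factorial_succ, pow_succ]
    calc Nat.card (RootedForest V k (m + 1)) *
          ((m + 1) * m ! * ((k - 1)! ^ m * (k - 1)!) * (c - (k - 1))!)
        = Nat.card (RootedForest V k (m + 1)) * (m + 1) *
          (m ! * (k - 1)! ^ m * ((k - 1)! * (c - (k - 1))!)) := by ring
      _ = Nat.card (RootedForest V k m) * (m ! * (k - 1)! ^ m *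
          (c.choose (k - 1) * (k - 1)! * (c - (k - 1))!)) * n := by rw [hrec]; ring
      _ = n ^ (m + 1) * (n - 1)! := by
          rw [Nat.choose_mul_factorial_mul_factorial hkc, ih (by omega)]; ring

end RootedForest

lemma card_rootedSections_eq_card_rootedForest [Fintype V] [DecidableEq V] {k r m : ℕ}
    (hk : 2 ≤ k) (hrm : r + (k - 1) * m = Fintype.card V) :
    Nat.card {F : (E' : Finset (Finset V)) × (Quot (HGAdj E') → V) //
        (∀ A ∈ F.1, A.card = k) ∧ ¬ HasHGCycle F.1 ∧
        Nat.card (Quot (HGAdj F.1)) = r ∧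
        ∀ c, Quot.mk (HGAdj F.1) (F.2 c) = c} = Nat.card (RootedForest V k m) := by
  refine Nat.card_congr
    { toFun := fun F => ⟨F.1.1, fun v => F.1.2 (Quot.mk _ v), F.2.1, F.2.2.1, ?_,
        .of_section F.2.2.2.2⟩
      invFun := fun F =>
        ⟨⟨F.edges, Quot.lift F.root fun _ _ h => F.isRootMap.eq_of_reach (.single h)⟩,
          F.card_of_mem, F.acyclic, ?_,
          Quot.ind fun v => quot_mk_eq_iff_hgReach.2 (symm (F.isRootMap.reach v))⟩
      left_inv := fun F => Subtype.ext (Sigma.ext rfl (heq_of_eq (funext (Quot.ind fun _ => rfl))))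
      right_inv := fun F => rfl }
  · have := card_quot_add_mul_card_of_card_eq F.2.2.1 F.2.1
    exact Nat.eq_of_mul_eq_mul_left (by omega : 0 < k - 1) (by omega)
  · show Nat.card (Quot (HGAdj F.edges)) = r
    have := card_quot_add_mul_card_of_card_eq F.acyclic F.card_of_mem
    rw [F.card_edges] at this
    omega

/-- The number of rooted spanning hyperforests with exactly `r` components of the
complete `k`-uniform hypergraph on `n` labeled vertices equals
`binomial(n-1, r-1) * (n-r)! / (((n-r)/(k-1))! * ((k-1)!)^((n-r)/(k-1))) * n^((n-r)/(k-1))`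
when `k - 1` divides `n - r` (stated with denominators cleared), and `0` otherwise.
A rooted spanning hyperforest is a `k`-uniform hypergraph on `Fin n` with no
hypercycles, together with a choice of a root vertex in each connected component. -/
theorem complete_uniform_rooted_hyperforest_count (n k r : ℕ) (hk : 2 ≤ k)
    (hr : 1 ≤ r) (hrn : r ≤ n) :
    ((k - 1) ∣ (n - r) →
      Nat.card {F : (E' : Finset (Finset (Fin n))) × (Quot (HGAdj E') → Fin n) //
          (∀ A ∈ F.1, A.card = k) ∧ ¬ HasHGCycle F.1 ∧
          Nat.card (Quot (HGAdj F.1)) = r ∧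
          ∀ c, Quot.mk (HGAdj F.1) (F.2 c) = c} *
        (((n - r) / (k - 1)).factorial * ((k - 1).factorial) ^ ((n - r) / (k - 1))) =
        (n - 1).choose (r - 1) * (n - r).factorial * n ^ ((n - r) / (k - 1))) ∧
    (¬ (k - 1) ∣ (n - r) →
      Nat.card {F : (E' : Finset (Finset (Fin n))) × (Quot (HGAdj E') → Fin n) //
          (∀ A ∈ F.1, A.card = k) ∧ ¬ HasHGCycle F.1 ∧
          Nat.card (Quot (HGAdj F.1)) = r ∧
          ∀ c, Quot.mk (HGAdj F.1) (F.2 c) = c} = 0) := by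
  have : Nonempty (Fin n) := ⟨⟨0, by omega⟩⟩
  refine ⟨fun hdvd => ?_, fun hndvd => Nat.card_eq_zero.2 (.inl ⟨fun F => hndvd ?_⟩)⟩
  · set m := (n - r) / (k - 1)
    have hm : (k - 1) * m = n - r := Nat.mul_div_cancel' hdvd
    have hforests := RootedForest.card_mul_factorial (V := Fin n) hk m (by simp; omega)
    rw [Fintype.card_fin, show n - 1 - (k - 1) * m = r - 1 by omega] at hforests
    have hchoose := Nat.choose_mul_factorial_mul_factorial (show r - 1 ≤ n - 1 by omega)
    rw [show n - 1 - (r - 1) = n - r by omega] at hchoose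
    rw [card_rootedSections_eq_card_rootedForest hk (m := m) (by simp; omega)]
    refine Nat.eq_of_mul_eq_mul_right (Nat.factorial_pos (r - 1)) ?_
    calc _ = n ^ m * (n - 1)! := by rw [← hforests]; ring
      _ = _ := by rw [← hchoose]; ring
  · have := card_quot_add_mul_card_of_card_eq F.2.2.1 F.2.1
    rw [F.2.2.2.1, Fintype.card_fin] at this
    exact ⟨F.1.1.card, by omega⟩
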